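/- For every natural number n ≥ 2, the function f(s) = (1 − e^{−6ns/(n+3)})/((1 − e^{−3ns/(n+3)})²·(1 − e^{−2ns/(n+3)})·(1 − e^{−6s/(n+3)})), defined for s > 0, has Hilbert-series Laurent coefficients (a₀, a₁) of order 3 at s = 0 with a₀ = a₁ = (n+3)³/(18n²). -/

import Mathlib

/-!
Write `g x = (1 - e⁻ˣ) / x`, so that `g 0 = 1` and `g' 0 = -1/2`. Since `1 - e^{-ks} = k s g(k s)`,
for weights `w₀, …, wₙ` and degree `d`
`sⁿ (1 - e^{-ds}) / ∏ᵢ (1 - e^{-wᵢ s}) = (d / ∏ᵢ wᵢ) · g(d s) / ∏ᵢ g(wᵢ s) =: F(s)`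
for `s > 0`, and `F` is differentiable at `0`. Hence `a₀ = F 0 = d / ∏ᵢ wᵢ` and
`a₁ = F' 0 = a₀ (∑ᵢ wᵢ - d) / 2`. For the threefold the Reeb charges satisfy `∑ᵢ wᵢ - d = 2`,
so `a₁ = a₀`.
-/

open Filter Real Topology

/-- `f` has Hilbert-series Laurent coefficients `(a₀, a₁)` of order `n` at `s = 0`:
`sⁿ·f(s) → a₀` and `sⁿ⁻¹·(f(s) − a₀/sⁿ) → a₁` as `s → 0⁺`. -/
def HSLaurentCoeffs (f : ℝ → ℝ) (n : ℕ) (a₀ a₁ : ℝ) : Prop :=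
  Filter.Tendsto (fun s => s ^ n * f s) (nhdsWithin 0 (Set.Ioi 0)) (nhds a₀) ∧
  Filter.Tendsto (fun s => s ^ (n - 1) * (f s - a₀ / s ^ n))
    (nhdsWithin 0 (Set.Ioi 0)) (nhds a₁)

theorem hasDerivAt_dslope_same {f f' : ℝ → ℝ} {f'' a : ℝ}
    (hf : ∀ᶠ x in 𝓝 a, HasDerivAt f (f' x) x) (hf' : HasDerivAt f' f'' a) :
    HasDerivAt (dslope f a) (f'' / 2) a := by
  have hfa : deriv f a = f' a := hf.self_of_nhds.deriv
  rw [hasDerivAt_iff_tendsto_slope]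
  have hpunct : ∀ᶠ x in 𝓝[≠] a, x ≠ a := self_mem_nhdsWithin
  -- The slope of `dslope f a` at `a` is the Taylor remainder over `(x - a)²`; L'Hôpital
  -- reduces it to the slope of `f'`.
  have hlim : Tendsto (fun x => (f x - f a - f' a * (x - a)) / (x - a) ^ 2) (𝓝[≠] a)
      (𝓝 (f'' / 2)) := by
    refine HasDerivAt.lhopital_zero_nhdsNE (f' := fun x => f' x - f' a)
      (g' := fun x => 2 * (x - a)) ?_ ?_ ?_ ?_ ?_ ?_
    · filter_upwards [nhdsWithin_le_nhds hf] with x hx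
      simpa using (hx.sub_const (f a)).fun_sub (((hasDerivAt_id' x).sub_const a).const_mul (f' a))
    · exact Eventually.of_forall fun x => by
        simpa using ((hasDerivAt_id' x).sub_const a).fun_pow 2
    · filter_upwards [hpunct] with x hx
      exact mul_ne_zero two_ne_zero (sub_ne_zero.mpr hx)
    · have hc : ContinuousAt f a := hf.self_of_nhds.continuousAt
      have : Tendsto (fun x => f x - f a - f' a * (x - a)) (𝓝 a) (𝓝 (f a - f a - f' a * (a - a))) :=
        ((hc.tendsto.sub_const _).sub ((tendsto_id.sub_const a).const_mul _))
      simpa using this.mono_left nhdsWithin_le_nhds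
    · have : Tendsto (fun x => (x - a) ^ 2) (𝓝 a) (𝓝 ((a - a) ^ 2)) :=
        (tendsto_id.sub_const a).pow 2
      simpa using this.mono_left nhdsWithin_le_nhds
    · have := (hasDerivAt_iff_tendsto_slope.mp hf').div_const 2
      refine this.congr' ?_
      filter_upwards [hpunct] with x hx
      rw [slope_def_field]
      field_simp
  refine hlim.congr' ?_
  filter_upwards [hpunct] with x hx
  have hxa : x - a ≠ 0 := sub_ne_zero.mpr hx
  rw [slope_def_field, dslope_same, hfa, dslope_of_ne f hx, slope_def_field]
  field_simp

/-- `(1 - e⁻ˣ) / x`, extended by its limit `1` at `x = 0`. -/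
noncomputable def oneSubExpNegDiv : ℝ → ℝ := dslope (fun x => 1 - exp (-x)) 0

theorem mul_oneSubExpNegDiv (x : ℝ) : x * oneSubExpNegDiv x = 1 - exp (-x) := by
  simpa [oneSubExpNegDiv] using sub_smul_dslope (fun x => 1 - exp (-x)) 0 x

theorem hasDerivAt_one_sub_exp_neg (x : ℝ) :
    HasDerivAt (fun x => 1 - exp (-x)) (exp (-x)) x := by
  simpa using ((hasDerivAt_neg x).exp).const_sub 1

theorem oneSubExpNegDiv_zero : oneSubExpNegDiv 0 = 1 := by
  simp [oneSubExpNegDiv, (hasDerivAt_one_sub_exp_neg 0).deriv]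

theorem oneSubExpNegDiv_ne_zero (x : ℝ) : oneSubExpNegDiv x ≠ 0 := by
  rcases eq_or_ne x 0 with rfl | hx
  · simp [oneSubExpNegDiv_zero]
  · refine right_ne_zero_of_mul (a := x) ?_
    rw [mul_oneSubExpNegDiv, sub_ne_zero, ne_comm, Ne, exp_eq_one_iff]
    exact neg_ne_zero.mpr hx

theorem hasDerivAt_oneSubExpNegDiv_zero : HasDerivAt oneSubExpNegDiv (-1 / 2) 0 := by
  have h := hasDerivAt_dslope_same (Eventually.of_forall hasDerivAt_one_sub_exp_neg)
    (by simpa using (hasDerivAt_neg (0 : ℝ)).exp)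
  simpa [oneSubExpNegDiv] using h

theorem HSLaurentCoeffs.of_hasDerivAt {f F : ℝ → ℝ} {n : ℕ} {a₁ : ℝ} (hn : n ≠ 0)
    (hfF : ∀ s > 0, s ^ n * f s = F s) (hF : HasDerivAt F a₁ 0) :
    HSLaurentCoeffs f n (F 0) a₁ := by
  have hpos : ∀ᶠ s in 𝓝[>] (0 : ℝ), 0 < s := self_mem_nhdsWithin
  constructor
  · refine (hF.continuousAt.tendsto.mono_left nhdsWithin_le_nhds).congr' ?_
    filter_upwards [hpos] with s hs
    exact (hfF s hs).symm
  · refine ((hasDerivAt_iff_tendsto_slope.mp hF).mono_left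
      (nhdsWithin_mono _ fun s hs => ne_of_gt hs)).congr' ?_
    filter_upwards [hpos] with s hs
    obtain ⟨m, rfl⟩ := Nat.exists_eq_succ_of_ne_zero hn
    rw [slope_def_field, sub_zero, ← hfF s hs, Nat.succ_sub_one, pow_succ]
    field_simp

theorem hasDerivAt_oneSubExpNegDiv_comp_mul_zero (k : ℝ) :
    HasDerivAt (fun s => oneSubExpNegDiv (k * s)) (-k / 2) 0 :=
  (hasDerivAt_oneSubExpNegDiv_zero.comp_of_eq 0 ((hasDerivAt_id' 0).const_mul k)
    (mul_zero k).symm).congr_deriv (by ring)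

theorem hsLaurentCoeffs_one_sub_exp_div_prod {ι : Type*} [Fintype ι] {n : ℕ} (hn : n ≠ 0)
    (hι : Fintype.card ι = n + 1) (d : ℝ) {w : ι → ℝ} (hw : ∀ i, w i ≠ 0) :
    HSLaurentCoeffs (fun s => (1 - exp (-(d * s))) / ∏ i, (1 - exp (-(w i * s)))) n
      (d / ∏ i, w i) (d / (∏ i, w i) * ((∑ i, w i - d) / 2)) := by
  set F : ℝ → ℝ := fun s =>
    d / (∏ i, w i) * (oneSubExpNegDiv (d * s) / ∏ i, oneSubExpNegDiv (w i * s)) with hF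
  have hg := hasDerivAt_oneSubExpNegDiv_comp_mul_zero
  classical
  have hFderiv : HasDerivAt F (d / (∏ i, w i) * ((∑ i, w i - d) / 2)) 0 := by
    refine (((hg d).div (HasDerivAt.fun_finsetProd (u := Finset.univ) fun i _ => hg (w i))
      (by simp [oneSubExpNegDiv_zero])).const_mul (d / ∏ i, w i)).congr_deriv ?_
    simp only [mul_zero, oneSubExpNegDiv_zero, Finset.prod_const_one, one_smul, one_pow,
      div_one, mul_one, one_mul]
    rw [← Finset.sum_div, Finset.sum_neg_distrib]
    ring
  have hF0 : F 0 = d / ∏ i, w i := by simp [hF, oneSubExpNegDiv_zero]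
  have hfF : ∀ s > 0,
      s ^ n * ((1 - exp (-(d * s))) / ∏ i, (1 - exp (-(w i * s)))) = F s := by
    intro s hs
    simp only [hF, ← mul_oneSubExpNegDiv, Finset.prod_mul_distrib, Finset.prod_const,
      Finset.card_univ, hι]
    have hw' : ∏ i, w i ≠ 0 := Finset.prod_ne_zero_iff.mpr fun i _ => hw i
    have hg' : ∏ i, oneSubExpNegDiv (w i * s) ≠ 0 :=
      Finset.prod_ne_zero_iff.mpr fun i _ => oneSubExpNegDiv_ne_zero _
    field_simp
    ring
  have key := HSLaurentCoeffs.of_hasDerivAt hn hfF hFderiv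
  rwa [hF0] at key

/-- The Hilbert series of the threefold `w² + x² + y³ + zⁿ = 0` (`n ≥ 2`; the E₆ threefold
for `n = 4`, E₈ for `n = 5`) has Laurent coefficients `a₀ = a₁ = (n+3)³/(18n²)` of order 3. -/
theorem E68_type_threefold_hs_coeffs (n : ℕ) (hn : 2 ≤ n) :
    HSLaurentCoeffs
      (fun s => (1 - Real.exp (-(6 * (n : ℝ) * s / ((n : ℝ) + 3))))
        / ((1 - Real.exp (-(3 * (n : ℝ) * s / ((n : ℝ) + 3)))) ^ 2
           * (1 - Real.exp (-(2 * (n : ℝ) * s / ((n : ℝ) + 3))))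
           * (1 - Real.exp (-(6 * s / ((n : ℝ) + 3))))))
      3 (((n : ℝ) + 3) ^ 3 / (18 * (n : ℝ) ^ 2))
        (((n : ℝ) + 3) ^ 3 / (18 * (n : ℝ) ^ 2)) := by
  have hn0 : (n : ℝ) ≠ 0 := Nat.cast_ne_zero.mpr (by omega)
  have hn3 : (n : ℝ) + 3 ≠ 0 := by positivity
  have key := hsLaurentCoeffs_one_sub_exp_div_prod (ι := Fin 4) three_ne_zero rfl
    (6 * n / (n + 3)) (w := ![3 * n / (n + 3), 3 * n / (n + 3), 2 * n / (n + 3), 6 / (n + 3)])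
    (by simp [Fin.forall_fin_succ, hn0, hn3])
  simp only [Fin.prod_univ_four, Fin.sum_univ_four, Matrix.cons_val] at key
  convert key using 1
  · funext s
    ring_nf
  · field_simp
    ring
  · field_simp
    ring
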